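/- arXiv:2011.01732 — 2 statements merged into one kernel-verified Lean document; each statement's English description precedes it below -/
import Mathlib

section
/- Let G be a one-ended finitely generated group, equipped with the word metric of a finite generating set S. Then for any total order T on G and any integer N, there exists a snake on 4 points in (G,T) of width 1 and of diameter at least N. In particular, Br(G) ≥ 4. -/
open scoped Classical

/-- Length of the path visiting the points of a list in order,
for a distance function `d`. -/
noncomputable def pathLen {α : Type*} (d : α → α → ℝ) : List α → ℝ
  | [] => 0
  | [_] => 0
  | a :: b :: l => d a b + pathLen d (b :: l)

/-- `lopt d X` : minimal length of a path visiting all points of the finite set `X`. -/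
noncomputable def lopt {α : Type*} (d : α → α → ℝ) (X : Finset α) : ℝ :=
  sInf {r : ℝ | ∃ l : List α, l.Nodup ∧ l.toFinset = X ∧ pathLen d l = r}

/-- `lord d T X` : length of the path visiting all points of `X` in the order `T`. -/
noncomputable def lord {α : Type*} (d : α → α → ℝ) (T : LinearOrder α) (X : Finset α) : ℝ :=
  sInf {r : ℝ | ∃ l : List α, l.Nodup ∧ l.toFinset = X ∧ List.Pairwise T.lt l ∧ pathLen d l = r}

/-- The order ratio function `OR_{M,T}(k)`. -/
noncomputable def ORd {α : Type*} (d : α → α → ℝ) (T : LinearOrder α) (k : ℕ) : ℝ :=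
  sSup {r : ℝ | ∃ X : Finset α, 2 ≤ X.card ∧ X.card ≤ k + 1 ∧ r = lord d T X / lopt d X}

/-- The order breakpoint `Br(M,T)`: the smallest `s` with `OR_{M,T}(s) < s`, or `∞`. -/
noncomputable def Brd {α : Type*} (d : α → α → ℝ) (T : LinearOrder α) : ℕ∞ :=
  if h : ∃ s : ℕ, ORd d T s < s then (Nat.find h : ℕ∞) else ⊤

/-- The order breakpoint of the (unordered) space: minimum over all total orders. -/
noncomputable def BrSp {α : Type*} (d : α → α → ℝ) : ℕ∞ :=
  ⨅ T : LinearOrder α, Brd d T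

/-- A snake in an ordered space: a tuple of points strictly increasing with respect to `T`. -/
def IsSnake {α : Type*} (T : LinearOrder α) {n : ℕ} (x : Fin n → α) : Prop :=
  ∀ i j : Fin n, i < j → T.lt (x i) (x j)

/-- Diameter of a snake. -/
noncomputable def snakeDiam {α : Type*} (d : α → α → ℝ) {n : ℕ} (x : Fin n → α) : ℝ :=
  sSup {r : ℝ | ∃ i j : Fin n, r = d (x i) (x j)}

/-- Width of a snake: maximal distance between points whose indices have the same parity. -/
noncomputable def snakeWidth {α : Type*} (d : α → α → ℝ) {n : ℕ} (x : Fin n → α) : ℝ :=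
  sSup {r : ℝ | ∃ i j : Fin n, i.val % 2 = j.val % 2 ∧ r = d (x i) (x j)}

/-- The Cayley graph of a group with respect to a finite set `S`. -/
def cayley {G : Type*} [Group G] (S : Finset G) : SimpleGraph G :=
  SimpleGraph.fromRel (fun g h => g⁻¹ * h ∈ S)

/-- A graph is one-ended: for every finite set `K` of vertices, the graph induced on the
complement of `K` has exactly one infinite connected component. -/
def OneEnded {α : Type*} (Γ : SimpleGraph α) : Prop :=
  ∀ K : Finset α,
    ∃! C : (Γ.induce ((K : Set α)ᶜ)).ConnectedComponent, C.supp.Infinite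

/-!
A quadruple `a < c < b < e` with edges `ab`, `ce` and `dist c b ≥ N` (a "far crossing") is a snake
on four points of width `1` and diameter at least `N`. For `k ≤ 3` the first `k + 1` points of such
a snake are visited by the order in length about `k · dist a c`, while a path using the short edges
has length about `dist a c`; so far crossings for every `N` give `OR(k) ≥ k` for `k ≤ 3`, i.e.
`Br ≥ 4`.

Suppose there is no far crossing for some `N`. Since the Cayley graph is locally finite,
vertex-transitive and one-ended, there is a uniform `R` such that every point at distance `> R`
from `x` lies in the infinite component of the complement of the ball `B(x, N + 2)`. For an edge
`a < b`, an edge leaving the interval `(a, b)` far from `a` would form a far crossing with `ab`, so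
`B(a, N + 2)` separates `(a, b)` from its complement, and one of the two sides lies within `R` of
`a`. If some lower set `A` and its complement are both infinite, one-endedness forces infinitely
many edges across the cut; three of them far apart are nested, and the middle one has far points
on both sides. Otherwise the order is `ω` or its reverse up to a finite set. Then the edges leaving
a long initial segment all end near its last point `t`, so the segment is cut off by a ball around
`t`, and it must lie in a ball of fixed radius around `t`, which has too few points.
-/

namespace SimpleGraph

variable {V : Type*} {Γ : SimpleGraph V} {K A : Set V}

def closedBall (Γ : SimpleGraph V) (c : V) (r : ℕ) : Set V := {v | Γ.dist c v ≤ r}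

@[simp]
lemma mem_closedBall {c v : V} {r : ℕ} : v ∈ Γ.closedBall c r ↔ Γ.dist c v ≤ r := Iff.rfl

lemma finite_setOf_exists_walk_length_le (Γ : SimpleGraph V) [LocallyFinite Γ] (r : ℕ) :
    ∀ c : V, {v | ∃ p : Γ.Walk c v, p.length ≤ r}.Finite := by
  induction r with
  | zero =>
    refine fun c => (Set.finite_singleton c).subset ?_
    rintro v ⟨p, hp⟩
    exact (Walk.eq_of_length_eq_zero (Nat.le_zero.mp hp)).symm
  | succ r ih =>
    intro c
    refine ((Set.finite_singleton c).union
      ((Γ.neighborSet c).toFinite.biUnion fun z _ => ih z)).subset ?_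
    rintro v ⟨_ | ⟨hcz, q⟩, hp⟩
    · exact Or.inl rfl
    · exact Or.inr (Set.mem_biUnion hcz ⟨q, by simpa using hp⟩)

lemma Connected.finite_closedBall [LocallyFinite Γ] (hconn : Γ.Connected) (c : V) (r : ℕ) :
    (Γ.closedBall c r).Finite := by
  refine (Γ.finite_setOf_exists_walk_length_le r c).subset fun v hv => ?_
  obtain ⟨p, hp⟩ := hconn.exists_walk_length_eq_dist c v
  exact ⟨p, hp.trans_le hv⟩

lemma Connected.dist_map_iso {W : Type*} {Γ' : SimpleGraph W} (hconn : Γ.Connected)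
    (φ : Γ ≃g Γ') (u v : V) : Γ'.dist (φ u) (φ v) = Γ.dist u v := by
  have hconn' : Γ'.Connected := (Iso.connected_iff φ).mp hconn
  refine le_antisymm ?_ ?_
  · obtain ⟨p, hp⟩ := hconn.exists_walk_length_eq_dist u v
    simpa [hp] using dist_le (p.map φ.toHom)
  · obtain ⟨p, hp⟩ := hconn'.exists_walk_length_eq_dist (φ u) (φ v)
    simpa [hp] using dist_le (p.map φ.symm.toHom)

lemma Connected.image_closedBall (hconn : Γ.Connected) (φ : Γ ≃g Γ) (c : V) (r : ℕ) :
    φ '' Γ.closedBall c r = Γ.closedBall (φ c) r := by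
  ext v
  obtain ⟨u, rfl⟩ := φ.surjective v
  simp [φ.injective.eq_iff, hconn.dist_map_iso]

lemma Connected.exists_finset_pairwise_dist_gt [LocallyFinite Γ] (hconn : Γ.Connected)
    {A : Set V} (hA : A.Infinite) (D n : ℕ) :
    ∃ F : Finset V, ↑F ⊆ A ∧ F.card = n ∧
      ∀ x ∈ F, ∀ y ∈ F, x ≠ y → D < Γ.dist x y := by
  induction n with
  | zero => exact ⟨∅, by simp, rfl, by simp⟩
  | succ n ih =>
    obtain ⟨F, hFA, hcard, hF⟩ := ih
    have hnear : (⋃ x ∈ F, Γ.closedBall x D).Finite :=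
      F.finite_toSet.biUnion fun x _ => hconn.finite_closedBall x D
    obtain ⟨z, hzA, hz⟩ := (hA.sdiff hnear).nonempty
    have hfar : ∀ x ∈ F, D < Γ.dist x z := fun x hx =>
      not_le.mp fun h => hz (Set.mem_biUnion hx h)
    have hzF : z ∉ F := fun h => by simpa using hfar z h
    refine ⟨insert z F, by simp [Set.insert_subset_iff, hzA, hFA], by simp [hzF, hcard], ?_⟩
    simp only [Finset.mem_insert]
    rintro x (rfl | hx) y (rfl | hy) hxy
    · exact absurd rfl hxy
    · rw [dist_comm]; exact hfar y hy
    · exact hfar x hx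
    · exact hF x hx y hy hxy

def Separates (Γ : SimpleGraph V) (K A : Set V) : Prop :=
  ∀ ⦃u v⦄, Γ.Adj u v → u ∈ A → v ∉ A → u ∈ K ∨ v ∈ K

def infinitePart (Γ : SimpleGraph V) (K : Set V) : Set V :=
  {v | ∃ C : Γ.ComponentCompl K, v ∈ C ∧ (C : Set V).Infinite}

lemma ComponentCompl.subset_of_separates {C : Γ.ComponentCompl K} (hsep : Γ.Separates K A)
    {x : V} (hxC : x ∈ C) (hxA : x ∈ A) : (C : Set V) ⊆ A := by
  intro y hyC
  by_contra hyA
  obtain ⟨hxK, rfl⟩ := hxC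
  obtain ⟨hyK, hy⟩ := hyC
  obtain ⟨p⟩ := ConnectedComponent.exact hy.symm
  obtain ⟨d, -, hdA, hdA'⟩ := p.exists_boundary_dart (Subtype.val ⁻¹' A) hxA hyA
  rcases hsep d.adj hdA hdA' with h | h
  exacts [d.fst.2 h, d.snd.2 h]

lemma notMem_of_mem_infinitePart {v : V} (hv : v ∈ Γ.infinitePart K) : v ∉ K := by
  obtain ⟨C, hvC, -⟩ := hv
  exact C.notMem_of_mem hvC

lemma Separates.notMem_infinitePart (hsep : Γ.Separates K A) (hA : A.Finite) {v : V}
    (hvA : v ∈ A) : v ∉ Γ.infinitePart K := by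
  rintro ⟨C, hvC, hC⟩
  exact hC (hA.subset (C.subset_of_separates hsep hvC hvA))

-- `OneEnded` measures a component by `ConnectedComponent.supp`, a set of the subtype `Kᶜ`.
lemma ComponentCompl.infinite_supp_iff (C : Γ.ComponentCompl K) :
    (C : Set V).Infinite ↔ (ConnectedComponent.supp C).Infinite := by
  have himage : (C : Set V) = Subtype.val '' ConnectedComponent.supp C := by
    ext v
    simp [ComponentCompl.mem_supp_iff, ConnectedComponent.mem_supp_iff]
  rw [himage, Set.infinite_image_iff Subtype.val_injective.injOn]

lemma Preconnected.finite_compl_infinitePart [LocallyFinite Γ] (hpc : Γ.Preconnected)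
    (hK : K.Finite) : (Γ.infinitePart K)ᶜ.Finite := by
  obtain ⟨F, rfl⟩ := hK.exists_finset_coe
  have : Fact Γ.Preconnected := ⟨hpc⟩
  refine (F.finite_toSet.union (Set.finite_iUnion
    fun C : {C : Γ.ComponentCompl F // (C : Set V).Finite} => C.2)).subset ?_
  intro v hv
  by_cases hvK : v ∈ (F : Set V)
  · exact Or.inl hvK
  · have hfin : (Γ.componentComplMk hvK : Set V).Finite := by
      by_contra hinf
      exact hv ⟨_, Γ.componentComplMk_mem hvK, hinf⟩
    exact Or.inr (Set.mem_iUnion.2 ⟨⟨_, hfin⟩, Γ.componentComplMk_mem hvK⟩)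

lemma Connected.exists_forall_dist_gt_mem_infinitePart [LocallyFinite Γ] (hconn : Γ.Connected)
    (c : V) (r : ℕ) : ∃ R : ℕ, ∀ y, R < Γ.dist c y → y ∈ Γ.infinitePart (Γ.closedBall c r) := by
  obtain ⟨R, hR⟩ := ((hconn.preconnected.finite_compl_infinitePart
    (hconn.finite_closedBall c r)).image (Γ.dist c)).bddAbove
  exact ⟨R, fun y hy => by_contra fun h => hy.not_ge (hR ⟨y, h, rfl⟩)⟩

lemma Iso.mem_infinitePart_image {W : Type*} {Γ' : SimpleGraph W} (φ : Γ ≃g Γ') {y : V}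
    (hy : y ∈ Γ.infinitePart K) : φ y ∈ Γ'.infinitePart (φ '' K) := by
  obtain ⟨C, hyC, hC⟩ := hy
  have hmaps : Set.MapsTo φ Kᶜ (φ '' K)ᶜ := fun v hv ⟨u, hu, huv⟩ =>
    hv (φ.injective huv ▸ hu)
  let C' : Γ'.ComponentCompl (φ '' K) := C.map (induceHom φ.toHom hmaps)
  have himage : φ '' (C : Set V) ⊆ C' := by
    rintro _ ⟨v, ⟨hvK, rfl⟩, rfl⟩
    exact ⟨hmaps hvK, rfl⟩
  exact ⟨C', himage ⟨y, hyC, rfl⟩, (hC.image φ.injective.injOn).mono himage⟩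

lemma _root_.OneEnded.eq_of_infinite (hend : OneEnded Γ) (hK : K.Finite) {C D : Γ.ComponentCompl K}
    (hC : (C : Set V).Infinite) (hD : (D : Set V).Infinite) : C = D := by
  obtain ⟨F, rfl⟩ := hK.exists_finset_coe
  exact (hend F).unique (C.infinite_supp_iff.mp hC) (D.infinite_supp_iff.mp hD)

lemma _root_.OneEnded.mem_of_separates (hend : OneEnded Γ) (hK : K.Finite) (hsep : Γ.Separates K A)
    {x y : V} (hx : x ∈ Γ.infinitePart K) (hy : y ∈ Γ.infinitePart K) (hxA : x ∈ A) :
    y ∈ A := by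
  obtain ⟨C, hxC, hC⟩ := hx
  obtain ⟨D, hyD, hD⟩ := hy
  rw [hend.eq_of_infinite hK hD hC] at hyD
  exact C.subset_of_separates hsep hxC hxA hyD

lemma _root_.OneEnded.finite_or_finite_compl_of_separates [LocallyFinite Γ] (hend : OneEnded Γ)
    (hpc : Γ.Preconnected) (hK : K.Finite) (hsep : Γ.Separates K A) : A.Finite ∨ Aᶜ.Finite := by
  by_contra! h
  have hbad := hpc.finite_compl_infinitePart hK
  obtain ⟨x, hxA, hx⟩ := (h.1.sdiff hbad).nonempty
  obtain ⟨y, hyA, hy⟩ := (h.2.sdiff hbad).nonempty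
  exact hyA (hend.mem_of_separates hK hsep (not_not.mp hx) (not_not.mp hy) hxA)

lemma _root_.OneEnded.infinite (hend : OneEnded Γ) : Infinite V := by
  obtain ⟨C, hC, -⟩ := hend ∅
  by_contra hfin
  rw [not_infinite_iff_finite] at hfin
  exact hC (Set.toFinite _)

def IsVertexTransitive (Γ : SimpleGraph V) : Prop := ∀ x y : V, ∃ φ : Γ ≃g Γ, φ x = y

lemma IsVertexTransitive.exists_forall_dist_gt_mem_infinitePart [LocallyFinite Γ]
    (htrans : Γ.IsVertexTransitive) (hconn : Γ.Connected) (r : ℕ) :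
    ∃ R : ℕ, ∀ x y, R < Γ.dist x y → y ∈ Γ.infinitePart (Γ.closedBall x r) := by
  rcases isEmpty_or_nonempty V with hV | ⟨⟨o⟩⟩
  · exact ⟨0, fun x => isEmptyElim x⟩
  obtain ⟨R, hR⟩ := hconn.exists_forall_dist_gt_mem_infinitePart o r
  refine ⟨R, fun x y hxy => ?_⟩
  obtain ⟨φ, rfl⟩ := htrans o x
  obtain ⟨z, rfl⟩ := φ.surjective y
  rw [hconn.dist_map_iso] at hxy
  simpa [hconn.image_closedBall] using φ.mem_infinitePart_image (hR z hxy)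

lemma IsVertexTransitive.ncard_closedBall_eq (htrans : Γ.IsVertexTransitive)
    (hconn : Γ.Connected) (x y : V) (r : ℕ) :
    (Γ.closedBall x r).ncard = (Γ.closedBall y r).ncard := by
  obtain ⟨φ, rfl⟩ := htrans x y
  rw [← hconn.image_closedBall, Set.ncard_image_of_injective _ φ.injective]

end SimpleGraph

lemma exists_isLowerSet_infinite_or_finite_compl {α : Type*} [LinearOrder α] :
    (∃ A : Set α, IsLowerSet A ∧ A.Infinite ∧ Aᶜ.Infinite) ∨
      {t : α | (Set.Iic t).Finite}ᶜ.Finite ∨ {t : α | (Set.Ici t).Finite}ᶜ.Finite := by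
  by_cases hcut : ∃ A : Set α, IsLowerSet A ∧ A.Infinite ∧ Aᶜ.Infinite
  · exact Or.inl hcut
  push Not at hcut
  have hlower : IsLowerSet {t : α | (Set.Iic t).Finite} := fun s t hts hs =>
    hs.subset (Set.Iic_subset_Iic.mpr hts)
  by_cases hP : {t : α | (Set.Iic t).Finite}.Infinite
  · exact Or.inr (Or.inl (hcut _ hlower hP))
  refine Or.inr (Or.inr ((Set.not_infinite.mp hP).subset fun t ht => ?_))
  by_contra hIic
  have hIoi : (Set.Ioi t).Finite := by
    simpa [Set.compl_Iic] using hcut _ (isLowerSet_Iic t) hIic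
  exact ht (by simpa [← Set.Ioi_insert] using hIoi.insert t)

namespace SimpleGraph

section Order

variable {V : Type*} {Γ : SimpleGraph V} [LinearOrder V]

def HasFarCrossing (Γ : SimpleGraph V) (N : ℕ) : Prop :=
  ∃ a c b e : V, a < c ∧ c < b ∧ b < e ∧ Γ.Adj a b ∧ Γ.Adj c e ∧ N ≤ Γ.dist c b

lemma HasFarCrossing.of_orderDual {N : ℕ} (h : HasFarCrossing (V := Vᵒᵈ) Γ N) :
    Γ.HasFarCrossing N := by
  obtain ⟨a, c, b, e, hac, hcb, hbe, hab, hce, hdist⟩ := h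
  refine ⟨OrderDual.ofDual e, OrderDual.ofDual b, OrderDual.ofDual c, OrderDual.ofDual a,
    hbe, hcb, hac, hce.symm, hab.symm, ?_⟩
  rw [dist_comm]
  exact hdist

lemma hasFarCrossing_of_dist_gt [LocallyFinite Γ] (hconn : Γ.Connected) (hend : OneEnded Γ)
    {N R : ℕ} (hR : ∀ x y, R < Γ.dist x y → y ∈ Γ.infinitePart (Γ.closedBall x (N + 2)))
    {a b u w : V} (hab : Γ.Adj a b) (hu : u ∈ Set.Ioo a b) (hw : w ∉ Set.Icc a b)
    (hau : R < Γ.dist a u) (haw : R < Γ.dist a w) : Γ.HasFarCrossing N := by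
  by_contra hno
  -- an edge leaving `(a, b)` outside the ball would cross `ab` far from it
  have hsep : Γ.Separates (Γ.closedBall a (N + 2)) (Set.Ioo a b) := by
    intro p q hpq hp hq
    by_contra! hfar
    simp only [mem_closedBall, not_le] at hfar
    have hab1 : Γ.dist a b = 1 := dist_eq_one_iff_adj.mpr hab
    have hqa : q ≠ a := by rintro rfl; simp at hfar
    have hqb : q ≠ b := by rintro rfl; omega
    rcases lt_or_gt_of_ne hqa with hqa | hqa
    · exact hno ⟨q, a, p, b, hqa, hp.1, hp.2, hpq.symm, hab, by omega⟩
    · have hbq : b < q := lt_of_le_of_ne (not_lt.mp fun h => hq ⟨hqa, h⟩) hqb.symm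
      have htri := hconn.dist_triangle (u := a) (v := b) (w := p)
      rw [dist_comm (u := b)] at htri
      exact hno ⟨a, p, b, q, hp.1, hp.2, hbq, hab, hpq, by omega⟩
  exact hw (Set.Ioo_subset_Icc_self (hend.mem_of_separates (hconn.finite_closedBall a _) hsep
    (hR a u hau) (hR a w haw) hu))

lemma hasFarCrossing_of_not_nested (hconn : Γ.Connected) {N : ℕ} {a b a' b' : V}
    (hab : Γ.Adj a b) (hab' : Γ.Adj a' b') (haa' : a < a') (ha'b : a' < b)
    (hfar : N + 2 < Γ.dist a a') (hbb' : b ≤ b') : Γ.HasFarCrossing N := by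
  have hab1 : Γ.dist a b = 1 := dist_eq_one_iff_adj.mpr hab
  have htri := hconn.dist_triangle (u := a) (v := b) (w := a')
  rw [dist_comm (u := b)] at htri
  rcases hbb'.lt_or_eq with hbb' | rfl
  · exact ⟨a, a', b, b', haa', ha'b, hbb', hab, hab', by omega⟩
  · have hb'a' : Γ.dist a' b = 1 := dist_eq_one_iff_adj.mpr hab'
    omega

lemma hasFarCrossing_of_isLowerSet [LocallyFinite Γ] (hconn : Γ.Connected)
    (htrans : Γ.IsVertexTransitive) (hend : OneEnded Γ) {A : Set V} (hA : IsLowerSet A)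
    (hAinf : A.Infinite) (hAcinf : Aᶜ.Infinite) (N : ℕ) : Γ.HasFarCrossing N := by
  set K := {a ∈ A | ∃ b, Γ.Adj a b ∧ b ∉ A}
  have hsep : Γ.Separates K A := fun u v huv hu hv => Or.inl ⟨hu, v, huv, hv⟩
  have hKinf : K.Infinite := fun hK =>
    (hend.finite_or_finite_compl_of_separates hconn.preconnected hK hsep).elim hAinf hAcinf
  obtain ⟨R, hR⟩ := htrans.exists_forall_dist_gt_mem_infinitePart hconn (N + 2)
  obtain ⟨F, hFK, hF3, hFfar⟩ := hconn.exists_finset_pairwise_dist_gt hKinf R 3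
  set f := F.orderEmbOfFin hF3
  have hfK : ∀ i, f i ∈ K := fun i => hFK (F.orderEmbOfFin_mem hF3 i)
  choose b hb hbA using fun i => (hfK i).2
  have hfb : ∀ i j, f i < b j := fun i j => lt_of_not_ge fun h => hbA j (hA h (hfK i).1)
  have hfar : ∀ i j, i ≠ j → R < Γ.dist (f i) (f j) := fun i j hij =>
    hFfar _ (F.orderEmbOfFin_mem hF3 i) _ (F.orderEmbOfFin_mem hF3 j) (f.injective.ne hij)
  have hfar' : ∀ i j, i ≠ j → N + 2 < Γ.dist (f i) (f j) := fun i j hij => by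
    simpa using notMem_of_mem_infinitePart (hR _ _ (hfar i j hij))
  have hf01 : f 0 < f 1 := f.lt_iff_lt.mpr (by decide)
  have hf12 : f 1 < f 2 := f.lt_iff_lt.mpr (by decide)
  -- the boundary edges `f i, b i` are pairwise far apart, hence nested, and the middle one has
  -- `f 2` inside and `f 0` outside
  by_contra hno
  have hb10 : b 1 < b 0 := not_le.mp fun h =>
    hno (hasFarCrossing_of_not_nested hconn (hb 0) (hb 1) hf01 (hfb 1 0) (hfar' 0 1 (by decide)) h)
  have hb21 : b 2 < b 1 := not_le.mp fun h =>
    hno (hasFarCrossing_of_not_nested hconn (hb 1) (hb 2) hf12 (hfb 2 1) (hfar' 1 2 (by decide)) h)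
  exact hno (hasFarCrossing_of_dist_gt hconn hend hR (hb 1) ⟨hf12, (hfb 2 2).trans hb21⟩
    (fun h => h.1.not_gt hf01) (hfar 1 2 (by decide)) (hfar 1 0 (by decide)))

lemma dist_le_of_not_hasFarCrossing [LocallyFinite Γ] (hconn : Γ.Connected)
    (hend : OneEnded Γ) {N R : ℕ} (hno : ¬ Γ.HasFarCrossing N)
    (hR : ∀ x y, R < Γ.dist x y → y ∈ Γ.infinitePart (Γ.closedBall x (N + 2)))
    {x y u : V} (hxy : Γ.Adj x y) (hy : (Set.Iic y).Finite) (hu : u ∈ Set.Ioo x y) :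
    Γ.dist x u ≤ R := by
  have := hend.infinite
  by_contra! hxu
  obtain ⟨w, hyw, hw⟩ := ((Set.compl_Iic (a := y) ▸ hy.infinite_compl).sdiff
    (hconn.finite_closedBall x R)).nonempty
  exact hno (hasFarCrossing_of_dist_gt hconn hend hR hxy hu (fun h => h.2.not_gt hyw) hxu
    (not_le.mp hw))

lemma Iic_subset_closedBall_of_not_hasFarCrossing [LocallyFinite Γ] (hconn : Γ.Connected)
    (hend : OneEnded Γ) {N R₁ R₂ : ℕ} (hno : ¬ Γ.HasFarCrossing N)
    (hR₁ : ∀ x y, R₁ < Γ.dist x y → y ∈ Γ.infinitePart (Γ.closedBall x (N + 2)))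
    (hR₂ : ∀ x y, R₂ < Γ.dist x y → y ∈ Γ.infinitePart (Γ.closedBall x (R₁ + 1)))
    (hP : {t : V | (Set.Iic t).Finite}ᶜ.Finite) {t : V} (ht : (Set.Iic t).Finite)
    (hbound : ∀ x j, (Set.Iic x).Finite → ¬ (Set.Iic j).Finite → Γ.Adj x j → x ≤ t) :
    Set.Iic t ⊆ Γ.closedBall t R₂ := by
  set L := Set.Iic t ∪ {t : V | (Set.Iic t).Finite}ᶜ
  -- an edge leaving `L` starts at some `x ≤ t` and jumps over `t`, so it ends near `t`
  have hsep : Γ.Separates (Γ.closedBall t (R₁ + 1)) L := by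
    intro x y hxy hx hy
    simp only [L, Set.mem_union, Set.mem_Iic, Set.mem_compl_iff, Set.mem_ofPred_eq, not_or,
      not_le, not_not] at hx hy
    have hxt : x ≤ t := hx.resolve_right fun hx => hy.1.not_ge (hbound y x hy.2 hx hxy.symm)
    have hdxt : Γ.dist x t ≤ R₁ := by
      rcases hxt.lt_or_eq with hxt | rfl
      · exact dist_le_of_not_hasFarCrossing hconn hend hno hR₁ hxy hy.2 ⟨hxt, hy.1⟩
      · simp
    have htri := hconn.dist_triangle (u := t) (v := x) (w := y)
    rw [dist_comm (u := t) (v := x), dist_eq_one_iff_adj.mpr hxy] at htri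
    exact Or.inr (by simp only [mem_closedBall]; omega)
  intro w hw
  by_contra hfar
  exact hsep.notMem_infinitePart (ht.union hP) (Or.inl hw) (hR₂ t w (not_le.mp hfar))

lemma hasFarCrossing_of_finite_compl_setOf_finite_Iic [LocallyFinite Γ] (hconn : Γ.Connected)
    (htrans : Γ.IsVertexTransitive) (hend : OneEnded Γ)
    (hP : {t : V | (Set.Iic t).Finite}ᶜ.Finite) (N : ℕ) : Γ.HasFarCrossing N := by
  by_contra hno
  have := hend.infinite
  set P := {t : V | (Set.Iic t).Finite}
  obtain ⟨R₁, hR₁⟩ := htrans.exists_forall_dist_gt_mem_infinitePart hconn (N + 2)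
  obtain ⟨R₂, hR₂⟩ := htrans.exists_forall_dist_gt_mem_infinitePart hconn (R₁ + 1)
  obtain ⟨o⟩ : Nonempty V := inferInstance
  set m := (Γ.closedBall o R₂).ncard
  set X := {x ∈ P | ∃ j ∉ P, Γ.Adj x j}
  have hX : X.Finite := (hP.biUnion fun j _ => (Γ.neighborSet j).toFinite).subset
    fun x ⟨_, j, hj, hxj⟩ => Set.mem_biUnion hj hxj.symm
  obtain ⟨W, hWP, hWcard⟩ := (compl_compl P ▸ hP.infinite_compl).exists_subset_card_eq (m + 1)
  obtain ⟨t, htWX, ht⟩ := Set.exists_max_image (↑W ∪ X) id (W.finite_toSet.union hX)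
    ((Finset.coe_nonempty.mpr (Finset.card_pos.mp (by omega))).mono Set.subset_union_left)
  have hball := Iic_subset_closedBall_of_not_hasFarCrossing hconn hend hno hR₁ hR₂ hP
    (htWX.elim (fun h => hWP h) (fun h => h.1))
    fun x j hx hj hxj => ht x (Or.inr ⟨hx, j, hj, hxj⟩)
  have hW : (W : Set V) ⊆ Γ.closedBall t R₂ := fun w hw => hball (ht w (Or.inl hw))
  have hcard := Set.ncard_le_ncard hW (hconn.finite_closedBall t R₂)
  rw [Set.ncard_coe_finset, hWcard, htrans.ncard_closedBall_eq hconn t o] at hcard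
  omega

theorem IsVertexTransitive.hasFarCrossing [LocallyFinite Γ] (htrans : Γ.IsVertexTransitive)
    (hconn : Γ.Connected) (hend : OneEnded Γ) (N : ℕ) : Γ.HasFarCrossing N := by
  rcases exists_isLowerSet_infinite_or_finite_compl (α := V) with
    ⟨A, hA, hAinf, hAcinf⟩ | hP | hQ
  · exact hasFarCrossing_of_isLowerSet hconn htrans hend hA hAinf hAcinf N
  · exact hasFarCrossing_of_finite_compl_setOf_finite_Iic hconn htrans hend hP N
  · have : LocallyFinite (V := Vᵒᵈ) Γ := inferInstanceAs (LocallyFinite Γ)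
    exact (hasFarCrossing_of_finite_compl_setOf_finite_Iic (V := Vᵒᵈ) hconn htrans hend hQ
      N).of_orderDual

end Order

end SimpleGraph

section Cayley

variable {G : Type*} [Group G] (S : Finset G)

lemma cayley_adj {g h : G} : (cayley S).Adj g h ↔ g ≠ h ∧ (g⁻¹ * h ∈ S ∨ h⁻¹ * g ∈ S) := by
  simp [cayley, SimpleGraph.fromRel_adj]

def cayleyMulLeft (g : G) : cayley S ≃g cayley S where
  toEquiv := Equiv.mulLeft g
  map_rel_iff' := by simp [cayley_adj, mul_assoc]

@[simp]
lemma cayleyMulLeft_apply (g x : G) : cayleyMulLeft S g x = g * x := rfl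

lemma cayley_isVertexTransitive : (cayley S).IsVertexTransitive := fun x y =>
  ⟨cayleyMulLeft S (y * x⁻¹), by simp⟩

lemma cayley_connected (hgen : Subgroup.closure (S : Set G) = ⊤) : (cayley S).Connected := by
  have hreach : ∀ g, (cayley S).Reachable 1 g := fun g => by
    have hg : g ∈ Subgroup.closure (S : Set G) := hgen ▸ Subgroup.mem_top g
    induction hg using Subgroup.closure_induction with
    | mem s hs =>
      by_cases h : s = 1
      · rw [h]
      · exact ((cayley_adj S).mpr ⟨Ne.symm h, Or.inl (by simpa using hs)⟩).reachable
    | one => rfl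
    | mul a b _ _ ha hb =>
      have hb' : (cayley S).Reachable a (a * b) := by
        simpa using hb.map (cayleyMulLeft S a).toHom
      exact ha.trans hb'
    | inv a _ ha => simpa using (ha.map (cayleyMulLeft S a⁻¹).toHom).symm
  exact ⟨fun u v => (hreach u).symm.trans (hreach v)⟩

noncomputable instance : (cayley S).LocallyFinite := fun g =>
  have hfin : ((cayley S).neighborSet g).Finite := by
    refine ((S.finite_toSet.union S.finite_toSet.inv).image (g * ·)).subset fun h hgh => ?_
    obtain ⟨-, hS | hS⟩ := (cayley_adj S).mp hgh
    · exact ⟨g⁻¹ * h, Or.inl hS, by simp⟩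
    · exact ⟨g⁻¹ * h, Or.inr (by simpa using hS), by simp⟩
  hfin.fintype

end Cayley

section Breakpoint

variable {α : Type*}

structure IsPseudoMetric (d : α → α → ℝ) : Prop where
  dist_self : ∀ x, d x x = 0
  comm : ∀ x y, d x y = d y x
  triangle : ∀ x y z, d x z ≤ d x y + d y z

variable {d : α → α → ℝ}

lemma IsPseudoMetric.nonneg (hd : IsPseudoMetric d) (x y : α) : 0 ≤ d x y := by
  have := hd.triangle x y x
  rw [hd.dist_self, hd.comm y x] at this
  linarith

lemma pathLen_nonneg (hd : IsPseudoMetric d) : ∀ l : List α, 0 ≤ pathLen d l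
  | [] | [_] => by simp [pathLen]
  | a :: b :: l => add_nonneg (hd.nonneg a b) (pathLen_nonneg hd (b :: l))

lemma pathLen_le_pathLen_cons (hd : IsPseudoMetric d) (a : α) :
    ∀ l : List α, pathLen d l ≤ pathLen d (a :: l)
  | [] => by simp [pathLen]
  | b :: l => le_add_of_nonneg_left (hd.nonneg a b)

lemma dist_le_pathLen_cons_of_mem (hd : IsPseudoMetric d) (a : α) :
    ∀ {l : List α} {v : α}, v ∈ a :: l → d a v ≤ pathLen d (a :: l)
  | [], v, hv => by simp_all [hd.dist_self, pathLen]
  | b :: l, v, hv => by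
    rcases List.mem_cons.mp hv with rfl | hv
    · simpa [hd.dist_self] using pathLen_nonneg hd (v :: b :: l)
    · simp only [pathLen]
      linarith [dist_le_pathLen_cons_of_mem hd b hv, hd.triangle a b v]

lemma dist_le_pathLen_of_mem (hd : IsPseudoMetric d) :
    ∀ {l : List α} {u v : α}, u ∈ l → v ∈ l → d u v ≤ pathLen d l
  | a :: l, u, v, hu, hv => by
    rcases List.mem_cons.mp hu with rfl | hul
    · exact dist_le_pathLen_cons_of_mem hd u hv
    rcases List.mem_cons.mp hv with rfl | hvl
    · exact hd.comm u v ▸ dist_le_pathLen_cons_of_mem hd v hu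
    exact (dist_le_pathLen_of_mem hd hul hvl).trans (pathLen_le_pathLen_cons hd a l)

lemma pathLen_le_mul_of_forall_dist_le {M : ℝ} :
    ∀ {l : List α}, (∀ u ∈ l, ∀ v ∈ l, d u v ≤ M) → pathLen d l ≤ (l.length - 1 : ℕ) * M
  | [], _ | [_], _ => by simp [pathLen]
  | a :: b :: l, hM => by
    have ih := pathLen_le_mul_of_forall_dist_le (l := b :: l) fun u hu v hv =>
      hM u (List.mem_cons_of_mem _ hu) v (List.mem_cons_of_mem _ hv)
    have hab := hM a List.mem_cons_self b (List.mem_cons_of_mem _ List.mem_cons_self)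
    simp only [pathLen, List.length_cons, Nat.add_sub_cancel] at ih ⊢
    push_cast at ih ⊢
    linarith

lemma dist_le_lopt (hd : IsPseudoMetric d) {X : Finset α} {u v : α} (hu : u ∈ X) (hv : v ∈ X) :
    d u v ≤ lopt d X :=
  le_csInf ⟨_, X.toList, X.nodup_toList, by simp, rfl⟩ fun _ ⟨l, _, hlX, hl⟩ =>
    hl ▸ dist_le_pathLen_of_mem hd (List.mem_toFinset.mp (hlX ▸ hu))
      (List.mem_toFinset.mp (hlX ▸ hv))

lemma lopt_nonneg (hd : IsPseudoMetric d) (X : Finset α) : 0 ≤ lopt d X :=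
  Real.sInf_nonneg fun _ ⟨l, _, _, hl⟩ => hl ▸ pathLen_nonneg hd l

lemma lopt_le_pathLen (hd : IsPseudoMetric d) {X : Finset α} {l : List α} (hl : l.Nodup)
    (hX : ∀ x, x ∈ l ↔ x ∈ X) : lopt d X ≤ pathLen d l :=
  csInf_le ⟨0, fun _ ⟨l', _, _, hl'⟩ => hl' ▸ pathLen_nonneg hd l'⟩
    ⟨l, hl, Finset.ext fun x => by simp [hX], rfl⟩

lemma lord_eq_pathLen (T : LinearOrder α) {X : Finset α} {l : List α} (hl : l.Nodup)
    (hlT : l.Pairwise T.lt) (hX : ∀ x, x ∈ l ↔ x ∈ X) : lord d T X = pathLen d l := by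
  let := T
  have hunique : {r | ∃ l' : List α, l'.Nodup ∧ l'.toFinset = X ∧ l'.Pairwise T.lt ∧
      pathLen d l' = r} = {pathLen d l} := by
    ext r
    refine ⟨fun ⟨l', _, hl', hl'T, hr⟩ => ?_,
      fun hr => ⟨l, hl, Finset.ext fun x => by simp [hX], hlT, hr.symm⟩⟩
    have hmem : ∀ x, x ∈ l' ↔ x ∈ l := fun x => by
      rw [← List.mem_toFinset, hl', hX]
    rw [← hr, List.Subset.antisymm_of_pairwise hl'T hlT (fun x => (hmem x).1)
      (fun x => (hmem x).2)]
    rfl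
  rw [lord, hunique, csInf_singleton]

lemma lord_le_mul_lopt (hd : IsPseudoMetric d) (T : LinearOrder α) (X : Finset α) :
    lord d T X ≤ (X.card - 1 : ℕ) * lopt d X := by
  let := T
  rw [lord_eq_pathLen T (X.sort_nodup (· ≤ ·)) (X.sortedLT_sort).pairwise fun x => X.mem_sort _,
    ← X.length_sort (· ≤ ·)]
  exact pathLen_le_mul_of_forall_dist_le fun u hu v hv =>
    dist_le_lopt hd ((X.mem_sort _).mp hu) ((X.mem_sort _).mp hv)

lemma lord_div_lopt_le (hd : IsPseudoMetric d) (T : LinearOrder α) {X : Finset α} {k : ℕ}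
    (hX : X.card ≤ k + 1) : lord d T X / lopt d X ≤ k := by
  rcases (lopt_nonneg hd X).eq_or_lt with h | h
  · rw [← h, div_zero]
    positivity
  rw [div_le_iff₀ h]
  refine (lord_le_mul_lopt hd T X).trans (mul_le_mul_of_nonneg_right ?_ h.le)
  exact_mod_cast (by omega : X.card - 1 ≤ k)

lemma le_ORd (hd : IsPseudoMetric d) (T : LinearOrder α) {k : ℕ} {c : ℝ}
    (h : ∀ N : ℝ, ∃ X : Finset α, 2 ≤ X.card ∧ X.card ≤ k + 1 ∧ N ≤ lopt d X ∧
      k * lopt d X ≤ lord d T X + c) : (k : ℝ) ≤ ORd d T k := by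
  refine le_of_forall_pos_lt_add fun ε hε => ?_
  obtain ⟨X, h2, hk, hN, hkX⟩ := h (|c| / ε + 1)
  have hpos : 0 < lopt d X := lt_of_lt_of_le (by positivity) hN
  have hc : |c| < ε * lopt d X := by
    rw [div_add_one hε.ne', div_le_iff₀ hε] at hN
    linarith
  have hratio : k - ε < lord d T X / lopt d X := by
    rw [lt_div_iff₀ hpos]
    linarith [le_abs_self c]
  have hbdd : BddAbove {r | ∃ X : Finset α, 2 ≤ X.card ∧ X.card ≤ k + 1 ∧
      r = lord d T X / lopt d X} :=
    ⟨k, fun _ ⟨_, _, hX, hr⟩ => hr ▸ lord_div_lopt_le hd T hX⟩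
  have hle := le_csSup hbdd ⟨X, h2, hk, rfl⟩
  rw [ORd]
  linarith

lemma ORd_zero (T : LinearOrder α) : ORd d T 0 = 0 := by
  rw [ORd, ← Real.sSup_empty]
  congr
  exact Set.eq_empty_of_forall_notMem fun r ⟨X, h2, h1, _⟩ => by omega

lemma le_Brd {T : LinearOrder α} {n : ℕ} (h : ∀ s < n, (s : ℝ) ≤ ORd d T s) :
    (n : ℕ∞) ≤ Brd d T := by
  rw [Brd]
  split_ifs with hs
  · exact_mod_cast (Nat.le_find_iff hs n).mpr fun s hsn => not_lt.mpr (h s hsn)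
  · exact le_top

def HasLongSnakes (d : α → α → ℝ) (T : LinearOrder α) : Prop :=
  ∀ N : ℝ, ∃ a c b e : α, T.lt a c ∧ T.lt c b ∧ T.lt b e ∧ d a b ≤ 1 ∧ d c e ≤ 1 ∧ N ≤ d c b

lemma le_ORd_of_lists (hd : IsPseudoMetric d) (T : LinearOrder α) {k : ℕ} {c : ℝ} (hk : 1 ≤ k)
    (h : ∀ N : ℝ, ∃ l l' : List α, l.Pairwise T.lt ∧ l.length = k + 1 ∧ l'.Perm l ∧
      (∃ u ∈ l, ∃ v ∈ l, N ≤ d u v) ∧ k * pathLen d l' ≤ pathLen d l + c) :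
    (k : ℝ) ≤ ORd d T k := by
  refine le_ORd hd T (c := c) fun N => ?_
  obtain ⟨l, l', hlT, hlen, hperm, ⟨u, hu, v, hv, hN⟩, hkl⟩ := h N
  have hl : l.Nodup := by
    let := T
    exact hlT.imp ne_of_lt
  have hcard : l.toFinset.card = k + 1 := by rw [List.toFinset_card_of_nodup hl, hlen]
  refine ⟨l.toFinset, by omega, hcard.le,
    hN.trans (dist_le_lopt hd (List.mem_toFinset.mpr hu) (List.mem_toFinset.mpr hv)), ?_⟩
  have hopt := lopt_le_pathLen hd (X := l.toFinset) (hperm.nodup_iff.mpr hl)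
    fun x => by simp [hperm.mem_iff]
  rw [lord_eq_pathLen T hl hlT fun x => by simp]
  linarith [mul_le_mul_of_nonneg_left hopt (Nat.cast_nonneg k : (0 : ℝ) ≤ k)]

lemma HasLongSnakes.le_ORd (hd : IsPseudoMetric d) {T : LinearOrder α} (hs : HasLongSnakes d T)
    {k : ℕ} (hk1 : 1 ≤ k) (hk3 : k ≤ 3) : (k : ℝ) ≤ ORd d T k := by
  let := T
  refine le_ORd_of_lists hd T (c := 9) hk1 fun N => ?_
  obtain ⟨a, c, b, e, hac, hcb, hbe, hab, hce, hN⟩ := hs (N + 1)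
  have hcab := hd.triangle c a b
  have habc := hd.triangle a b c
  have hceb := hd.triangle c e b
  rw [hd.comm c a] at hcab
  rw [hd.comm b c] at habc
  rw [hd.comm e b] at hceb
  have hN' : N ≤ d a c := by linarith
  -- `l` is the order's path; `l'` crosses the long gap once and uses the short edges, so
  -- `lopt ≤ d a c + k - 1` while `lord ≥ k * d a c - k * (k - 1) / 2`
  interval_cases k
  · refine ⟨[a, c], [a, c], by simpa using hac, rfl, .refl _, ⟨a, by simp, c, by simp, hN'⟩, ?_⟩
    simp only [pathLen]
    push_cast
    linarith
  · refine ⟨[a, c, b], [c, a, b], by simp [hac, hcb, hac.trans hcb], rfl, .swap a c [b],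
      ⟨a, by simp, c, by simp, hN'⟩, ?_⟩
    simp only [pathLen, hd.comm c a]
    push_cast
    linarith
  · refine ⟨[a, c, b, e], [b, a, c, e],
      by simp [hac, hcb, hbe, hac.trans hcb, hcb.trans hbe, (hac.trans hcb).trans hbe], rfl,
      (List.Perm.swap a b [c, e]).trans (.cons a (.swap c b [e])),
      ⟨a, by simp, c, by simp, hN'⟩, ?_⟩
    simp only [pathLen, hd.comm b a]
    push_cast
    linarith

lemma HasLongSnakes.four_le_Brd (hd : IsPseudoMetric d) {T : LinearOrder α}
    (hs : HasLongSnakes d T) : 4 ≤ Brd d T := by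
  have h4 : ((4 : ℕ) : ℕ∞) ≤ Brd d T := le_Brd fun s hs4 => by
    rcases Nat.eq_zero_or_pos s with rfl | hs1
    · simp [ORd_zero]
    · exact hs.le_ORd hd hs1 (by omega)
  exact_mod_cast h4

end Breakpoint

namespace SimpleGraph

variable {V : Type*} {Γ : SimpleGraph V}

lemma Connected.isPseudoMetric_dist (hconn : Γ.Connected) :
    IsPseudoMetric fun u v : V => (Γ.dist u v : ℝ) where
  dist_self _ := by simp
  comm _ _ := by rw [dist_comm]
  triangle _ _ _ := by exact_mod_cast hconn.dist_triangle

variable [LinearOrder V]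

lemma hasLongSnakes_dist (h : ∀ N : ℕ, Γ.HasFarCrossing N) :
    HasLongSnakes (fun u v : V => (Γ.dist u v : ℝ)) inferInstance := fun N => by
  obtain ⟨a, c, b, e, hac, hcb, hbe, hab, hce, hN⟩ := h ⌈N⌉₊
  refine ⟨a, c, b, e, hac, hcb, hbe, ?_, ?_, (Nat.le_ceil N).trans (Nat.cast_le.mpr hN)⟩
  · simp [dist_eq_one_iff_adj.mpr hab]
  · simp [dist_eq_one_iff_adj.mpr hce]

lemma HasFarCrossing.exists_snake {N : ℕ} (h : Γ.HasFarCrossing N) :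
    ∃ x : Fin 4 → V, IsSnake inferInstance x ∧
      snakeWidth (fun u v : V => (Γ.dist u v : ℝ)) x = 1 ∧
      (N : ℝ) ≤ snakeDiam (fun u v : V => (Γ.dist u v : ℝ)) x := by
  obtain ⟨a, c, b, e, hac, hcb, hbe, hab, hce, hN⟩ := h
  have hab1 : Γ.dist a b = 1 := dist_eq_one_iff_adj.mpr hab
  have hce1 : Γ.dist c e = 1 := dist_eq_one_iff_adj.mpr hce
  have hba1 : Γ.dist b a = 1 := dist_eq_one_iff_adj.mpr hab.symm
  have hec1 : Γ.dist e c = 1 := dist_eq_one_iff_adj.mpr hce.symm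
  set x : Fin 4 → V := ![a, c, b, e]
  refine ⟨x, ?_, ?_, ?_⟩
  · intro i j hij
    fin_cases i <;> fin_cases j <;> simp [x] at hij ⊢ <;> order
  · rw [snakeWidth]
    refine IsGreatest.csSup_eq ⟨⟨0, 2, rfl, by simp [x, hab1]⟩, ?_⟩
    rintro r ⟨i, j, hij, rfl⟩
    fin_cases i <;> fin_cases j <;> simp [x] at hij ⊢ <;> simp [hab1, hce1, hba1, hec1]
  · rw [snakeDiam]
    have hbdd : BddAbove {r | ∃ i j : Fin 4, r = (Γ.dist (x i) (x j) : ℝ)} :=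
      ((Set.finite_range fun p : Fin 4 × Fin 4 => (Γ.dist (x p.1) (x p.2) : ℝ)).subset
        (by rintro _ ⟨i, j, rfl⟩; exact ⟨(i, j), rfl⟩)).bddAbove
    exact (Nat.cast_le.mpr hN).trans (le_csSup hbdd ⟨1, 2, rfl⟩)

end SimpleGraph

/-- Let `G` be a one-ended finitely generated group with the word metric of a finite
generating set `S`.  Then for every total order `T` on `G` and every integer `N` there is
a snake on `4` points of width `1` and diameter at least `N`; in particular `Br(G) ≥ 4`. -/
theorem stmt16 {G : Type*} [Group G] (S : Finset G)
    (hgen : Subgroup.closure (S : Set G) = ⊤)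
    (hend : OneEnded (cayley S)) :
    (∀ (T : LinearOrder G) (N : ℕ), ∃ x : Fin 4 → G,
      IsSnake T x ∧
      snakeWidth (fun g h : G => ((cayley S).dist g h : ℝ)) x = 1 ∧
      (N : ℝ) ≤ snakeDiam (fun g h : G => ((cayley S).dist g h : ℝ)) x) ∧
    4 ≤ BrSp (fun g h : G => ((cayley S).dist g h : ℝ)) := by
  have hconn := cayley_connected S hgen
  have hcross (T : LinearOrder G) (N : ℕ) : @SimpleGraph.HasFarCrossing G T (cayley S) N :=
    (cayley_isVertexTransitive S).hasFarCrossing hconn hend N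
  refine ⟨fun T N => (hcross T N).exists_snake, le_iInf fun T => ?_⟩
  exact (SimpleGraph.hasLongSnakes_dist (hcross T)).four_le_Brd hconn.isPseudoMetric_dist
end

section
/- Let G be a group with a finite generating set S, and assume G is not finitely presented. Then for every N > 0 there is an isometric embedding of a cycle of length greater than N into the Cayley graph Γ(G,S); that is, there exists n > N and a cycle of n vertices in Γ(G,S) such that the graph distance in Γ(G,S) between any two of its vertices equals their distance along the cycle. -/
/-- A group is finitely presented if it is isomorphic to a group presented by finitely many
generators and finitely many relations. -/
def IsFinitelyPresented (G : Type*) [Group G] : Prop :=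
  ∃ (n : ℕ) (rels : Set (FreeGroup (Fin n))),
    rels.Finite ∧ Nonempty (G ≃* PresentedGroup rels)

open FreeGroup (mk invRev lift_mk mul_mk inv_mk one_eq_mk)
open SimpleGraph (Walk fromRel_adj dist_le)

theorem FreeGroup.mk_append_append_eq {α : Type*} (x y z m : List (α × Bool)) :
    mk (x ++ y ++ z) = mk x * mk (y ++ invRev m) * (mk x)⁻¹ * mk (x ++ m ++ z) := by
  simp only [← mul_mk, ← inv_mk]
  group

def IsIsometricCycle {V : Type*} (Γ : SimpleGraph V) {n : ℕ} (f : ZMod n → V) : Prop :=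
  ∀ i j : ZMod n, Γ.dist (f i) (f j) = min (i - j).val (j - i).val

theorem ZMod.val_sub_of_val_lt {n : ℕ} [NeZero n] {a b : ZMod n} (h : a.val < b.val) :
    (a - b).val = n - (b.val - a.val) := by
  have hab : b - a ≠ 0 := by
    rw [sub_ne_zero]; rintro rfl; exact h.false
  rw [← neg_sub, ZMod.neg_val, if_neg hab, ZMod.val_sub h.le]

namespace cayley

variable {G : Type*} [Group G] (S : Finset G)

local notation "π" => FreeGroup.lift (Subtype.val : S → G)

theorem adj_mul_iff (g t : G) : (cayley S).Adj g (g * t) ↔ t ≠ 1 ∧ (t ∈ S ∨ t⁻¹ ∈ S) := by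
  simp [cayley, SimpleGraph.fromRel_adj]

def shortRelators (C : ℕ) : Set (FreeGroup S) :=
  mk '' {l | l.length ≤ C ∧ π (mk l) = 1}

theorem shortRelators_finite (C : ℕ) : (shortRelators S C).Finite :=
  ((List.finite_length_le _ C).subset fun _ hl => hl.1).image mk

theorem lift_mk_singleton_mem (x : S × Bool) : π (mk [x]) ∈ S ∨ (π (mk [x]))⁻¹ ∈ S := by
  obtain ⟨⟨g, hg⟩, _ | _⟩ := x <;> simp [lift_mk, hg]

theorem exists_walk_mul_lift_mk (g : G) (l : List (S × Bool)) :
    ∃ p : (cayley S).Walk g (g * π (mk l)), p.length ≤ l.length := by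
  induction l generalizing g with
  | nil => exact ⟨Walk.nil.copy rfl (by simp [← one_eq_mk]), by rw [Walk.length_copy]; rfl⟩
  | cons x l ih =>
    obtain ⟨p, hp⟩ := ih (g * π (mk [x]))
    have hmk : g * π (mk [x]) * π (mk l) = g * π (mk (x :: l)) := by
      rw [mul_assoc, ← map_mul, mul_mk, List.singleton_append]
    by_cases hx : π (mk [x]) = 1
    · refine ⟨p.copy (by rw [hx, mul_one]) hmk, ?_⟩
      simp only [Walk.length_copy, List.length_cons]
      omega
    · have hadj : (cayley S).Adj g (g * π (mk [x])) :=
        (adj_mul_iff S _ _).2 ⟨hx, lift_mk_singleton_mem S x⟩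
      refine ⟨(p.cons hadj).copy rfl hmk, ?_⟩
      simp only [Walk.length_copy, Walk.length_cons, List.length_cons]
      omega

theorem dist_mul_lift_mk_le (g : G) (l : List (S × Bool)) :
    (cayley S).dist g (g * π (mk l)) ≤ l.length :=
  let ⟨p, hp⟩ := exists_walk_mul_lift_mk S g l
  (dist_le p).trans hp

theorem exists_word_of_walk {u v : G} (p : (cayley S).Walk u v) :
    ∃ m : List (S × Bool), m.length = p.length ∧ π (mk m) = u⁻¹ * v := by
  induction p with
  | nil => exact ⟨[], rfl, by simp [← one_eq_mk]⟩
  | @cons u w v h p ih =>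
    obtain ⟨m, hm, hpm⟩ := ih
    obtain ⟨x, hx⟩ : ∃ x : S × Bool, π (mk [x]) = u⁻¹ * w := by
      rw [cayley, fromRel_adj] at h
      rcases h.2 with hs | hs
      · exact ⟨(⟨_, hs⟩, true), by simp [lift_mk]⟩
      · exact ⟨(⟨_, hs⟩, false), by simp [lift_mk]⟩
    refine ⟨x :: m, by simp [hm], ?_⟩
    rw [← List.singleton_append, ← mul_mk, map_mul, hx, hpm]
    group

theorem dist_le_min_of_lift_mk_eq_one {x y z : List (S × Bool)} (h : π (mk (x ++ y ++ z)) = 1) :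
    (cayley S).dist (π (mk x)) (π (mk (x ++ y))) ≤ min y.length (x.length + z.length) := by
  have hxy : π (mk (x ++ y)) = π (mk x) * π (mk y) := by rw [← map_mul, mul_mk]
  have hzx : π (mk (x ++ y)) * π (mk (z ++ x)) = π (mk x) := by
    rw [← map_mul, mul_mk, ← List.append_assoc, ← mul_mk, map_mul, h, one_mul]
  refine le_min (hxy ▸ dist_mul_lift_mk_le S _ y) ?_
  rw [SimpleGraph.dist_comm, ← hzx, add_comm, ← List.length_append]
  exact dist_mul_lift_mk_le S _ _

theorem exists_split_of_not_isIsometricCycle {l : List (S × Bool)} (hl0 : l ≠ [])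
    (hl : π (mk l) = 1)
    (hcyc : ¬ IsIsometricCycle (cayley S) fun i : ZMod l.length => π (mk (l.take i.val))) :
    ∃ x y z, l = x ++ y ++ z ∧
      (cayley S).dist (π (mk x)) (π (mk (x ++ y))) < min y.length (x.length + z.length) := by
  have : NeZero l.length := ⟨by simpa using hl0⟩
  simp only [IsIsometricCycle, not_forall] at hcyc
  obtain ⟨i, j, hij⟩ := hcyc
  wlog hlt : i.val < j.val generalizing i j
  · rcases (not_lt.1 hlt).lt_or_eq with h | h
    · exact this j i (by rwa [SimpleGraph.dist_comm, min_comm]) h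
    · exact absurd (by simp [ZMod.val_injective _ h]) hij
  have hj : j.val ≤ l.length := (ZMod.val_lt j).le
  have hxy : l.take i.val ++ (l.take j.val).drop i.val = l.take j.val := by
    nth_rewrite 1 [← min_eq_left hlt.le, ← List.take_take]
    exact List.take_append_drop _ _
  have hsplit : l = l.take i.val ++ (l.take j.val).drop i.val ++ l.drop j.val := by
    rw [hxy, List.take_append_drop]
  refine ⟨_, _, _, hsplit, lt_of_le_of_ne (dist_le_min_of_lift_mk_eq_one S (hsplit ▸ hl)) ?_⟩
  rw [ZMod.val_sub_of_val_lt hlt, ZMod.val_sub hlt.le, min_comm] at hij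
  have hy : ((l.take j.val).drop i.val).length = j.val - i.val := by
    simp only [List.length_drop, List.length_take]
    omega
  have hxz : (l.take i.val).length + (l.drop j.val).length = l.length - (j.val - i.val) := by
    simp only [List.length_drop, List.length_take]
    omega
  rwa [hxy, hy, hxz]

theorem exists_shortcut_of_not_isIsometricCycle {l : List (S × Bool)} (hl0 : l ≠ [])
    (hl : π (mk l) = 1)
    (hcyc : ¬ IsIsometricCycle (cayley S) fun i : ZMod l.length => π (mk (l.take i.val))) :
    ∃ x y z m : List (S × Bool), l = x ++ y ++ z ∧ π (mk m) = π (mk y) ∧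
      m.length < y.length ∧ m.length < x.length + z.length := by
  obtain ⟨x, y, z, rfl, hlt⟩ := exists_split_of_not_isIsometricCycle S hl0 hl hcyc
  rw [← mul_mk, map_mul] at hlt
  obtain ⟨q, -⟩ := exists_walk_mul_lift_mk S (π (mk x)) y
  obtain ⟨p, hp⟩ := SimpleGraph.Reachable.exists_walk_length_eq_dist ⟨q⟩
  obtain ⟨m, hm, hpm⟩ := exists_word_of_walk S p
  refine ⟨x, y, z, m, rfl, by rw [hpm, inv_mul_cancel_left], ?_, ?_⟩ <;>
  · rw [hm, hp]
    omega

theorem mk_mem_normalClosure_shortRelators {C : ℕ}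
    (hC : ¬ ∃ n, C < n ∧ ∃ f : ZMod n → G, IsIsometricCycle (cayley S) f)
    (l : List (S × Bool)) (hl : π (mk l) = 1) :
    mk l ∈ Subgroup.normalClosure (shortRelators S C) := by
  induction hL : l.length using Nat.strong_induction_on generalizing l with
  | _ L ih =>
  by_cases hLC : L ≤ C
  · exact Subgroup.subset_normalClosure ⟨l, ⟨hL ▸ hLC, hl⟩, rfl⟩
  have hl0 : l ≠ [] := by
    rintro rfl
    simp only [List.length_nil] at hL
    omega
  obtain ⟨x, y, z, m, rfl, hm, hmy, hmxz⟩ :=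
    exists_shortcut_of_not_isIsometricCycle S hl0 hl fun hcyc => hC ⟨_, by omega, _, hcyc⟩
  simp only [List.length_append] at hL
  rw [FreeGroup.mk_append_append_eq x y z m]
  refine mul_mem (Subgroup.normalClosure_normal.conj_mem _ (ih _ ?_ _ ?_ rfl) _)
    (ih _ ?_ _ ?_ rfl)
  · simp only [List.length_append, FreeGroup.invRev_length]
    omega
  · rw [← mul_mk, ← inv_mk, map_mul, map_inv, hm, mul_inv_cancel]
  · simp only [List.length_append]
    omega
  · rwa [← mul_mk, ← mul_mk, map_mul, map_mul, hm, ← map_mul,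
      ← map_mul, mul_mk, mul_mk]

end cayley

theorem isFinitelyPresented_of_ker_eq {G α : Type*} [Group G] [Finite α] (f : FreeGroup α →* G)
    (hf : Function.Surjective f) {rels : Set (FreeGroup α)} (hrels : rels.Finite)
    (hker : f.ker = Subgroup.normalClosure rels) : IsFinitelyPresented G := by
  obtain ⟨n, ⟨e⟩⟩ := Finite.exists_equiv_fin α
  exact ⟨n, _, hrels.image _, ⟨(QuotientGroup.quotientKerEquivOfSurjective f hf).symm.trans
    ((QuotientGroup.quotientMulEquivOfEq hker).trans (PresentedGroup.equivPresentedGroup rels e))⟩⟩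

/-- If `G` is a finitely generated group which is not finitely presented, then for every
`N` there is an isometric embedding of a cycle of length `n > N` into the Cayley graph
`Γ(G,S)`: a map `f : ZMod n → G` such that the word distance between `f i` and `f j`
equals the distance between `i` and `j` along the cycle. -/
theorem stmt17 {G : Type*} [Group G] (S : Finset G)
    (hgen : Subgroup.closure (S : Set G) = ⊤)
    (hnfp : ¬ IsFinitelyPresented G) :
    ∀ N : ℕ, ∃ n : ℕ, N < n ∧ ∃ f : ZMod n → G,
      ∀ i j : ZMod n, (cayley S).dist (f i) (f j) = min (i - j).val (j - i).val := by
  intro N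
  by_contra hN
  refine hnfp (isFinitelyPresented_of_ker_eq (FreeGroup.lift Subtype.val) ?_
    (cayley.shortRelators_finite S N) (le_antisymm (fun w hw => ?_) ?_))
  · rw [← MonoidHom.range_eq_top, FreeGroup.range_lift_eq_closure, Subtype.range_coe, hgen]
  · obtain ⟨l, rfl⟩ := Quot.exists_rep w
    exact cayley.mk_mem_normalClosure_shortRelators S hN l hw
  · refine Subgroup.normalClosure_le_normal ?_
    rintro _ ⟨l, ⟨-, hl⟩, rfl⟩
    exact hl
end
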